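/- arXiv:2301.09242 — 2 statements merged into one kernel-verified Lean document; each statement's English description precedes it below -/
import Mathlib

section
/- Let n ≥ 1, let μ be a probability measure on F_m whose support is contained in {a_i^k : 1 ≤ i ≤ m, 1 ≤ |k| ≤ n}, fix 1 ≤ i ≤ m, let B := {a_i, a_i², …, a_i^n}, and set p_j := F_μ(e, a_i^j; B \ {a_i^j}) for 1 ≤ j ≤ n. Then for every integer k > n one has F_μ(e, a_i^k) = Σ_{j=1}^{n} p_j · F_μ(e, a_i^{k-j}). -/
/-!
Split a walk from `e` to `a_i^k` at its first visit to `B = {a_i, …, a_i^n}`. Such a visit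
exists: the exponent of the leading `a_i`-power of the reduced word of the position changes only
while the walk moves along the axis `⟨a_i⟩`, so it becomes positive (as it must, ending at `k`)
by a single jump `a_i^l`, `l ≤ n`, from some `a_i^e` with `e ≤ 0`, landing in `B`. Summing over the
first visited point `a_i^j` gives `p_j` times the first-passage weight from `a_i^j` to `a_i^k`,
which is `F_μ(e, a_i^{k-j})` by left invariance. The sums are rearranged in `ℝ≥0∞`; they are at
most `1` because first-passage walks are prefix-free, which justifies returning to `ℝ`.
-/

open scoped BigOperators

/-- Restricted first-passage function `F_μ(x, y; S)`: the total weight of paths from `x`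
to `y` that avoid `S ∪ {y}` before arriving at `y`. -/
noncomputable def FP {G : Type*} [Group G] (μ : G → ℝ) (x y : G) (S : Set G) : ℝ :=
  ∑' k : ℕ,
    ∑' f : {f : Fin (k + 1) → G // f 0 = x ∧ f (Fin.last k) = y ∧
        ∀ j : Fin k, f j.castSucc ∉ S ∪ {y}},
      ∏ j : Fin k, μ ((f.1 j.castSucc)⁻¹ * f.1 j.succ)

/-- `μ` is a probability measure on `G`. -/
def IsProb {G : Type*} (μ : G → ℝ) : Prop := (∀ g, 0 ≤ μ g) ∧ ∑' g, μ g = 1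

open scoped ENNReal Pointwise

section Walks

variable {G : Type*} [Monoid G]

def IsFirstPassage (x y : G) (S : Set G) (s : List G) : Prop :=
  x * s.prod = y ∧ ∀ t < s.length, x * (s.take t).prod ∉ S ∪ {y}

noncomputable def firstPassage (W : G → ℝ≥0∞) (x y : G) (S : Set G) : ℝ≥0∞ :=
  ∑' s : {s : List G // IsFirstPassage x y S s}, (s.1.map W).prod

theorem IsFirstPassage.mul_prod_mem {x y : G} {S : Set G} {s : List G}
    (hs : IsFirstPassage x y S s) : x * s.prod ∈ S ∪ {y} :=
  Or.inr hs.1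

theorem IsFirstPassage.mul_prod_take_notMem {x y : G} {B : Set G} {s : List G}
    (hs : IsFirstPassage x y (B \ {y}) s) : ∀ t < s.length, x * (s.take t).prod ∉ B :=
  fun t ht h ↦ hs.2 t ht (by simp [h])

theorem eq_of_prefix_of_mul_prod_mem {x : G} {Y : Set G} {u v : List G} (huv : u <+: v)
    (hu : x * u.prod ∈ Y) (hv : ∀ t < v.length, x * (v.take t).prod ∉ Y) : u = v := by
  refine huv.eq_of_length (le_antisymm huv.length_le (not_lt.1 fun hlt ↦ hv _ hlt ?_))
  rwa [← List.prefix_iff_eq_take.1 huv]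

theorem eq_and_eq_of_append_eq_append {x : G} {Y : Set G} {u u' v v' : List G}
    (h : u ++ v = u' ++ v') (hu : x * u.prod ∈ Y) (hu' : x * u'.prod ∈ Y)
    (hYu : ∀ t < u.length, x * (u.take t).prod ∉ Y)
    (hYu' : ∀ t < u'.length, x * (u'.take t).prod ∉ Y) : u = u' ∧ v = v' := by
  obtain rfl : u = u' := by
    rcases List.prefix_or_prefix_of_prefix (List.prefix_append u v)
      (h ▸ List.prefix_append u' v') with hp | hp
    · exact eq_of_prefix_of_mul_prod_mem hp hu hYu'
    · exact (eq_of_prefix_of_mul_prod_mem hp hu' hYu).symm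
  exact ⟨rfl, List.append_cancel_left h⟩

def lengthSuccEquiv (α : Type*) (r : ℕ) :
    α × {t : List α // t.length = r} ≃ {t : List α // t.length = r + 1} where
  toFun p := ⟨p.1 :: p.2.1, by simp [p.2.2]⟩
  invFun t := (t.1.head (List.ne_nil_of_length_eq_add_one t.2), ⟨t.1.tail, by simp [t.2]⟩)
  left_inv _ := rfl
  right_inv := by rintro ⟨_ | ⟨g, t⟩, h⟩ <;> simp at h ⊢

theorem tsum_prod_map_of_length_eq {α : Type*} {W : α → ℝ≥0∞} (hW : ∑' g, W g = 1) (r : ℕ) :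
    ∑' t : {t : List α // t.length = r}, (t.1.map W).prod = 1 := by
  induction r with
  | zero =>
    rw [tsum_eq_single (⟨[], rfl⟩ : {t : List α // t.length = 0}) fun t ht ↦
      (ht (Subtype.ext (List.eq_nil_of_length_eq_zero t.2))).elim]
    rfl
  | succ r ih =>
    rw [← (lengthSuccEquiv α r).tsum_eq]
    have hcons (p : α × {t : List α // t.length = r}) :
        ((lengthSuccEquiv α r p).1.map W).prod = W p.1 * (p.2.1.map W).prod := rfl
    simp only [hcons, ENNReal.tsum_prod', ENNReal.tsum_mul_left, ih, mul_one, hW]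

theorem firstPassage_le_one {W : G → ℝ≥0∞} (hW : ∑' g, W g = 1) (x y : G) (S : Set G) :
    firstPassage W x y S ≤ 1 := by
  rw [firstPassage, ENNReal.tsum_eq_iSup_sum]
  refine iSup_le fun F ↦ ?_
  set N := F.sup fun s ↦ s.1.length
  -- pad each walk of `F` to length `N`; padding is injective because walks are prefix-free
  let pad : (Σ s : F, {t : List G // t.length = N - s.1.1.length}) →
      {u : List G // u.length = N} := fun p ↦
    ⟨p.1.1.1 ++ p.2.1, by
      have := Finset.le_sup (f := fun s ↦ s.1.length) p.1.2
      simp only [List.length_append, p.2.2]; omega⟩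
  have hpad : Function.Injective pad := by
    rintro ⟨⟨⟨s, hs⟩, hsF⟩, t, ht⟩ ⟨⟨⟨s', hs'⟩, hs'F⟩, t', ht'⟩ h
    obtain ⟨rfl, rfl⟩ := eq_and_eq_of_append_eq_append (congrArg Subtype.val h)
      hs.mul_prod_mem hs'.mul_prod_mem hs.2 hs'.2
    rfl
  calc ∑ s ∈ F, (s.1.map W).prod
      = ∑' p : (Σ s : F, {t : List G // t.length = N - s.1.1.length}),
          (p.1.1.1.map W).prod * (p.2.1.map W).prod := by
        rw [ENNReal.tsum_sigma', ← Finset.tsum_subtype]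
        simp_rw [ENNReal.tsum_mul_left, tsum_prod_map_of_length_eq hW, mul_one]
    _ = ∑' p, ((pad p).1.map W).prod := by simp [pad]
    _ ≤ ∑' u : {u : List G // u.length = N}, (u.1.map W).prod :=
        ENNReal.tsum_comp_le_tsum_of_injective hpad _
    _ = 1 := tsum_prod_map_of_length_eq hW N

end Walks

section Decomposition

variable {G : Type*} [Monoid G]

theorem prod_map_ne_zero_iff {α : Type*} {W : α → ℝ≥0∞} {s : List α} :
    (s.map W).prod ≠ 0 ↔ ∀ g ∈ s, W g ≠ 0 := by
  simp [List.prod_eq_zero_iff]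

def Separates (W : G → ℝ≥0∞) (B : Set G) (x y : G) : Prop :=
  ∀ s : List G, (∀ g ∈ s, W g ≠ 0) → x * s.prod = y → ∃ t < s.length, x * (s.take t).prod ∈ B

theorem isFirstPassage_append {x b y : G} {u v : List G} (hu : x * u.prod = b)
    (huy : ∀ t < u.length, x * (u.take t).prod ≠ y) (hv : IsFirstPassage b y ∅ v) :
    IsFirstPassage x y ∅ (u ++ v) := by
  refine ⟨by rw [List.prod_append, ← mul_assoc, hu, hv.1], fun t ht ↦ ?_⟩
  simp only [Set.empty_union, Set.mem_singleton_iff]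
  rcases lt_or_ge t u.length with htu | htu
  · rw [List.take_append_of_le_length htu.le]
    exact huy t htu
  · obtain ⟨r, rfl⟩ := Nat.exists_eq_add_of_le htu
    rw [List.take_length_add_append, List.prod_append, ← mul_assoc, hu]
    simpa using hv.2 r (by simp only [List.length_append] at ht; omega)

theorem Separates.isFirstPassage_append {W : G → ℝ≥0∞} {B : Set G} {x b y : G} {u v : List G}
    (hB : Separates W B x y) (hu : IsFirstPassage x b (B \ {b}) u) (huW : ∀ g ∈ u, W g ≠ 0)
    (hv : IsFirstPassage b y ∅ v) : IsFirstPassage x y ∅ (u ++ v) := by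
  refine _root_.isFirstPassage_append hu.1 (fun t ht hty ↦ ?_) hv
  obtain ⟨t', ht', hmem⟩ := hB (u.take t) (fun g hg ↦ huW g (List.mem_of_mem_take hg)) hty
  rw [List.length_take] at ht'
  rw [List.take_take, min_eq_left (by omega)] at hmem
  exact hu.mul_prod_take_notMem t' (by omega) hmem

theorem exists_isFirstPassage_take_drop {x y : G} {B : Set G} {s : List G}
    (hs : IsFirstPassage x y ∅ s) (hhit : ∃ t < s.length, x * (s.take t).prod ∈ B) :
    ∃ τ, x * (s.take τ).prod ∈ B ∧
      IsFirstPassage x (x * (s.take τ).prod) (B \ {x * (s.take τ).prod}) (s.take τ) ∧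
      IsFirstPassage (x * (s.take τ).prod) y ∅ (s.drop τ) := by
  classical
  obtain ⟨τ, ⟨hτ, hτB⟩, hmin⟩ : ∃ τ, (τ < s.length ∧ x * (s.take τ).prod ∈ B) ∧
      ∀ t < τ, ¬(t < s.length ∧ x * (s.take t).prod ∈ B) :=
    ⟨Nat.find hhit, Nat.find_spec hhit, fun t ↦ Nat.find_min hhit⟩
  refine ⟨τ, hτB, ⟨rfl, fun t ht hmem ↦ ?_⟩, ?_, fun r hr hmem ↦ ?_⟩
  · rw [List.length_take] at ht
    rw [List.take_take, min_eq_left (by omega), Set.sdiff_union_self,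
      Set.union_singleton, Set.insert_eq_of_mem hτB] at hmem
    exact hmin t (by omega) ⟨by omega, hmem⟩
  · rw [mul_assoc, ← List.prod_append, List.take_append_drop, hs.1]
  · rw [List.length_drop] at hr
    rw [mul_assoc, ← List.prod_append, ← List.take_add] at hmem
    exact hs.2 (τ + r) (by omega) hmem

theorem Separates.firstPassage_eq_sum {W : G → ℝ≥0∞} {B : Finset G} {x y : G}
    (hB : Separates W B x y) :
    firstPassage W x y ∅ = ∑ b ∈ B, firstPassage W x b (↑B \ {b}) * firstPassage W b y ∅ := by
  let P := Σ b : B, {u // IsFirstPassage x b.1 (↑B \ {b.1}) u} × {v // IsFirstPassage b.1 y ∅ v}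
  let weight : P → ℝ≥0∞ := fun p ↦ (p.2.1.1.map W).prod * (p.2.2.1.map W).prod
  have hsum : ∑ b ∈ B, firstPassage W x b (↑B \ {b}) * firstPassage W b y ∅ =
      ∑' p, weight p := by
    rw [ENNReal.tsum_sigma', ← Finset.tsum_subtype]
    simp only [weight, firstPassage, ENNReal.tsum_prod', ENNReal.tsum_mul_left,
      ENNReal.tsum_mul_right]
  rw [hsum, firstPassage]
  refine tsum_eq_tsum_of_ne_zero_bij (fun p ↦ ⟨p.1.2.1.1 ++ p.1.2.2.1,
    hB.isFirstPassage_append p.1.2.1.2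
      (prod_map_ne_zero_iff.1 (left_ne_zero_of_mul p.2)) p.1.2.2.2⟩) ?_ ?_ fun p ↦ ?_
  · rintro ⟨⟨⟨b, hb⟩, ⟨u, hu⟩, ⟨v, _⟩⟩, _⟩ ⟨⟨⟨b', hb'⟩, ⟨u', hu'⟩, ⟨v', _⟩⟩, _⟩ h
    obtain ⟨rfl, rfl⟩ := eq_and_eq_of_append_eq_append (congrArg Subtype.val h)
      (by simpa [hu.1] using hb) (by simpa [hu'.1] using hb') hu.mul_prod_take_notMem
      hu'.mul_prod_take_notMem
    obtain rfl : b = b' := hu.1.symm.trans hu'.1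
    rfl
  · rintro ⟨s, hs⟩ hne
    have hsW := prod_map_ne_zero_iff.1 hne
    obtain ⟨τ, hτB, hu, hv⟩ := exists_isFirstPassage_take_drop hs (hB s hsW hs.1)
    refine ⟨⟨⟨⟨_, hτB⟩, ⟨_, hu⟩, ⟨_, hv⟩⟩, ?_⟩, Subtype.ext (List.take_append_drop τ s)⟩
    simpa [weight, ← List.prod_append, ← List.map_append] using hne
  · simp [weight]

end Decomposition

section Translation

variable {G : Type*} [Group G]

theorem isFirstPassage_mul_left_iff (g x y : G) (S : Set G) (s : List G) :
    IsFirstPassage (g * x) (g * y) (g • S) s ↔ IsFirstPassage x y S s := by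
  have hmem (z : G) : g * z ∈ g • S ∪ {g * y} ↔ z ∈ S ∪ {y} := by
    simp only [← smul_eq_mul, ← Set.smul_set_singleton, ← Set.smul_set_union,
      Set.smul_mem_smul_set_iff]
  simp only [IsFirstPassage, mul_assoc, mul_right_inj, hmem]

theorem firstPassage_mul_left (W : G → ℝ≥0∞) (g x y : G) (S : Set G) :
    firstPassage W (g * x) (g * y) (g • S) = firstPassage W x y S :=
  (Equiv.subtypeEquivRight (isFirstPassage_mul_left_iff g x y S)).tsum_eq
    fun s ↦ (s.1.map W).prod

end Translation

theorem IsProb.tsum_ofReal_eq_one {α : Type*} {μ : α → ℝ} (hμ : IsProb μ) :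
    ∑' g, ENNReal.ofReal (μ g) = 1 := by
  have hsum : Summable μ := by
    by_contra h
    simpa [tsum_eq_zero_of_not_summable h] using hμ.2
  rw [← ENNReal.ofReal_tsum_of_nonneg hμ.1 hsum, hμ.2, ENNReal.ofReal_one]

section Paths

variable {G : Type*} [Group G]

def pathSteps {k : ℕ} (f : Fin (k + 1) → G) : List G :=
  List.ofFn fun j : Fin k ↦ (f j.castSucc)⁻¹ * f j.succ

theorem mul_prod_take_pathSteps {k : ℕ} (f : Fin (k + 1) → G) {t : ℕ} (ht : t < k + 1) :
    f 0 * ((pathSteps f).take t).prod = f ⟨t, ht⟩ := by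
  induction t with
  | zero => simp
  | succ t ih =>
    rw [List.prod_take_succ _ _ (by simp [pathSteps]; omega), ← mul_assoc, ih (by omega)]
    simp [pathSteps, Fin.castSucc, Fin.succ]

theorem pathSteps_mul_prod_take (x : G) (s : List G) :
    pathSteps (fun t : Fin (s.length + 1) ↦ x * (s.take t).prod) = s :=
  List.ext_getElem (by simp [pathSteps]) fun _ _ _ ↦ by simp [pathSteps]

def pathEquiv (x y : G) (S : Set G) (k : ℕ) :
    {f : Fin (k + 1) → G // f 0 = x ∧ f (Fin.last k) = y ∧
        ∀ j : Fin k, f j.castSucc ∉ S ∪ {y}} ≃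
      {s : {s : List G // IsFirstPassage x y S s} // s.1.length = k} where
  toFun f := ⟨⟨pathSteps f.1, by
    obtain ⟨f, rfl, rfl, hf⟩ := f
    refine ⟨?_, fun t ht ↦ ?_⟩
    · have := mul_prod_take_pathSteps f (Nat.lt_succ_self k)
      rwa [List.take_of_length_le (by simp [pathSteps])] at this
    · simp only [pathSteps, List.length_ofFn] at ht
      simpa [mul_prod_take_pathSteps f (Nat.lt_succ_of_lt ht)] using hf ⟨t, ht⟩⟩, by simp [pathSteps]⟩
  invFun s := ⟨fun t ↦ x * (s.1.1.take t).prod, by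
    obtain ⟨⟨s, hs, hS⟩, rfl⟩ := s
    exact ⟨by simp, by simpa using hs, fun j ↦ hS j j.2⟩⟩
  left_inv f := by
    obtain ⟨f, rfl, -⟩ := f
    ext t
    exact mul_prod_take_pathSteps f t.2
  right_inv s := by
    obtain ⟨⟨s, hs⟩, rfl⟩ := s
    ext1; ext1
    exact pathSteps_mul_prod_take x s

theorem FP_eq_toReal_firstPassage {μ : G → ℝ} (hμ : IsProb μ) (x y : G) (S : Set G) :
    FP μ x y S = (firstPassage (fun g ↦ ENNReal.ofReal (μ g)) x y S).toReal := by
  set W := fun g ↦ ENNReal.ofReal (μ g)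
  have hfiber : firstPassage W x y S = ∑' k : ℕ,
      ∑' s : {s : {s : List G // IsFirstPassage x y S s} // s.1.length = k}, (s.1.1.map W).prod := by
    rw [firstPassage, ← (Equiv.sigmaFiberEquiv fun s : {s // IsFirstPassage x y S s} ↦
      s.1.length).tsum_eq, ENNReal.tsum_sigma']
    rfl
  have hfin (k : ℕ) : ∑' s : {s : {s : List G // IsFirstPassage x y S s} // s.1.length = k},
      (s.1.1.map W).prod ≠ ⊤ :=
    ne_top_of_le_ne_top ENNReal.one_ne_top <| (ENNReal.le_tsum k).trans <|
      hfiber ▸ firstPassage_le_one hμ.tsum_ofReal_eq_one x y S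
  rw [hfiber, ENNReal.tsum_toReal_eq hfin, FP]
  refine tsum_congr fun k ↦ ?_
  rw [← (pathEquiv x y S k).tsum_eq, ENNReal.tsum_toReal_eq fun f ↦ ?_]
  · refine tsum_congr fun f ↦ ?_
    simp [pathEquiv, pathSteps, W, List.map_ofFn, List.prod_ofFn, ENNReal.toReal_prod, hμ.1]
  · simp [pathEquiv, pathSteps, W, List.map_ofFn, List.prod_ofFn, ENNReal.prod_ne_top]

end Paths

section FreeGroup

open FreeGroup

variable {α : Type*} (i : α)

theorem mk_mem_zpowers_of {w : List (α × Bool)} (hw : ∀ z ∈ w, z.1 = i) :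
    mk w ∈ Subgroup.zpowers (of i) := by
  induction w with
  | nil => exact one_mem _
  | cons z w ih =>
    rw [← List.singleton_append, ← mul_mk]
    refine mul_mem ?_ (ih fun z hz ↦ hw z (List.mem_cons_of_mem _ hz))
    obtain ⟨j, _ | _⟩ := z <;> rw [show j = i from hw _ List.mem_cons_self]
    · simpa [of, inv_mk, invRev] using inv_mem (Subgroup.mem_zpowers (of i))
    · exact Subgroup.mem_zpowers _

variable [DecidableEq α]

/-- On a reduced word, the exponent `e` of its longest prefix of the form `i ^ e`. -/
def headExponent : List (α × Bool) → ℤ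
  | [] => 0
  | x :: w => if x.1 = i then headExponent w + (if x.2 then 1 else -1) else 0

def trailingExponent (g : FreeGroup α) : ℤ := headExponent i g.toWord.reverse

theorem headExponent_append_singleton {u : List (α × Bool)} {y : α × Bool}
    (h : y.1 ≠ i ∨ ∃ z ∈ u, z.1 ≠ i) : headExponent i (u ++ [y]) = headExponent i u := by
  induction u with
  | nil =>
    have hy : y.1 ≠ i := by simpa using h
    simp [headExponent, hy]
  | cons z u ih =>
    by_cases hz : z.1 = i
    · simp only [List.cons_append, headExponent, hz, if_true]
      rw [ih (by simpa [hz] using h)]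
    · simp [headExponent, hz]

theorem headExponent_reverse_cons {x : α × Bool} {w : List (α × Bool)}
    (h : x.1 ≠ i ∨ ∃ z ∈ w, z.1 ≠ i) :
    headExponent i (x :: w).reverse = headExponent i w.reverse := by
  rw [List.reverse_cons]
  exact headExponent_append_singleton i (by simpa using h)

theorem headExponent_replicate (n : ℕ) (b : Bool) :
    headExponent i (List.replicate n (i, b)) = if b then (n : ℤ) else -n := by
  induction n with
  | zero => simp [headExponent]
  | succ n ih => cases b <;> simp_all [List.replicate_succ, headExponent, add_comm]

theorem trailingExponent_mk_singleton_mul (x : α × Bool) (g : FreeGroup α)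
    (h : x.1 ≠ i ∨ g ∉ Subgroup.zpowers (of i)) :
    trailingExponent i (mk [x] * g) = trailingExponent i g := by
  replace h : x.1 ≠ i ∨ ∃ z ∈ g.toWord, z.1 ≠ i := h.imp_right fun hg ↦ by
    by_contra! hw
    exact hg (mk_toWord (x := g) ▸ mk_mem_zpowers_of i hw)
  have hred := reduce_toWord g
  rw [trailingExponent, trailingExponent, toWord_mul, toWord_mk, reduce_singleton,
    List.singleton_append, reduce.cons, hred]
  rcases hw : g.toWord with _ | ⟨y, w⟩
  · have hx : x.1 ≠ i := by simpa [hw] using h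
    simp [headExponent, hx]
  · simp only [hw] at h ⊢
    split_ifs with hxy
    · refine (headExponent_reverse_cons i ?_).symm
      rcases h with hx | ⟨z, hz, hzi⟩
      · exact Or.inl (hxy.1 ▸ hx)
      · rcases List.mem_cons.1 hz with rfl | hz
        exacts [Or.inl hzi, Or.inr ⟨z, hz, hzi⟩]
    · exact headExponent_reverse_cons i h

theorem trailingExponent_mk_singleton_pow_mul (x : α × Bool) (n : ℕ) (g : FreeGroup α)
    (h : x.1 ≠ i ∨ g ∉ Subgroup.zpowers (of i)) :
    trailingExponent i (mk [x] ^ n * g) = trailingExponent i g := by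
  induction n with
  | zero => simp
  | succ n ih =>
    rw [pow_succ', mul_assoc, trailingExponent_mk_singleton_mul i x _ ?_, ih]
    refine or_iff_not_imp_left.2 fun hx ↦ ?_
    have hxmem : mk [x] ∈ Subgroup.zpowers (of i) := by
      refine mk_mem_zpowers_of i fun z hz ↦ ?_
      rw [List.mem_singleton.1 hz]
      exact not_not.1 hx
    rw [Subgroup.mul_mem_cancel_left _ (pow_mem hxmem n)]
    exact h.resolve_left hx

theorem trailingExponent_of_zpow_mul {i' : α} (l : ℤ) (g : FreeGroup α)
    (h : i' ≠ i ∨ g ∉ Subgroup.zpowers (of i)) :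
    trailingExponent i (of i' ^ l * g) = trailingExponent i g := by
  obtain ⟨n, rfl | rfl⟩ := l.eq_nat_or_neg
  · rw [zpow_natCast]
    exact trailingExponent_mk_singleton_pow_mul i (i', true) n g h
  · rw [zpow_neg, zpow_natCast, ← inv_pow, show (of i')⁻¹ = mk [(i', false)] by
      simp [of, inv_mk, invRev]]
    exact trailingExponent_mk_singleton_pow_mul i (i', false) n g h

theorem trailingExponent_of_zpow (s : ℤ) : trailingExponent i (of i ^ s) = s := by
  obtain ⟨n, rfl | rfl⟩ := s.eq_nat_or_neg
  · simp [trailingExponent, headExponent_replicate]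
  · simp [trailingExponent, toWord_inv, invRev, headExponent_replicate]

theorem of_pow_injective : Function.Injective fun j : ℕ ↦ of i ^ j := fun a b h ↦ by
  simpa [← zpow_natCast, trailingExponent_of_zpow] using congrArg (trailingExponent i) h

theorem eq_of_zpow_mul_of_trailingExponent_ne {i' : α} {l : ℤ} {g : FreeGroup α}
    (h : trailingExponent i (of i' ^ l * g) ≠ trailingExponent i g) :
    i' = i ∧ g = of i ^ trailingExponent i g := by
  refine ⟨not_not.1 fun hi ↦ h (trailingExponent_of_zpow_mul i l g (Or.inl hi)), ?_⟩
  obtain ⟨s, rfl⟩ := Subgroup.mem_zpowers_iff.1 <|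
    not_not.1 fun hg ↦ h (trailingExponent_of_zpow_mul i l g (Or.inr hg))
  rw [trailingExponent_of_zpow]

theorem exists_take_prod_eq_of_pow {n k : ℕ} (hk : n < k) {s : List (FreeGroup α)}
    (hs : ∀ g ∈ s, ∃ (i' : α) (l : ℤ), |l| ≤ n ∧ g = of i' ^ l) (hprod : s.prod = of i ^ k) :
    ∃ t < s.length, ∃ j ∈ Finset.Icc 1 n, (s.take t).prod = of i ^ j := by
  classical
  -- `f t` is minus the exponent of the leading `i`-power of the position at time `t`;
  -- a step changes it only when taken along the `i`-axis from a point of that axis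
  set f : ℕ → ℤ := fun t ↦ trailingExponent i (s.take t).prod⁻¹
  have hlast (t : ℕ) (ht : s.length ≤ t) : f t = -k := by
    simp [f, List.take_of_length_le ht, hprod, ← zpow_natCast, ← zpow_neg,
      trailingExponent_of_zpow]
  have hneg : ∃ t, f t < 0 := ⟨s.length, by rw [hlast _ le_rfl]; omega⟩
  obtain ⟨τ, hτ, hmin⟩ : ∃ τ, f τ < 0 ∧ ∀ t < τ, 0 ≤ f t :=
    ⟨Nat.find hneg, Nat.find_spec hneg, fun t ht ↦ not_lt.1 (Nat.find_min hneg ht)⟩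
  obtain ⟨t, rfl⟩ : ∃ t, τ = t + 1 := Nat.exists_eq_succ_of_ne_zero fun h ↦ by
    simp [h, f, trailingExponent, headExponent] at hτ
  have hft := hmin t (lt_add_one t)
  have ht : t < s.length := not_le.1 fun h ↦ by rw [hlast t h] at hft; omega
  obtain ⟨i', l, hl, hsl⟩ := hs _ (List.getElem_mem ht)
  have hl' := le_abs_self l
  have hstep : (s.take (t + 1)).prod⁻¹ = of i' ^ (-l) * (s.take t).prod⁻¹ := by
    rw [List.prod_take_succ _ _ ht, mul_inv_rev, hsl, zpow_neg]
  obtain ⟨rfl, hax⟩ := eq_of_zpow_mul_of_trailingExponent_ne i (l := -l)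
    (g := (s.take t).prod⁻¹) (by rw [← hstep]; change f (t + 1) ≠ f t; omega)
  have hpos : (s.take (t + 1)).prod = of i' ^ (l - f t) := by
    rw [← inv_inv (s.take (t + 1)).prod, hstep, hax, ← zpow_add, ← zpow_neg]
    congr 1
    simp only [f]
    ring
  have hfτ : f (t + 1) = -l + f t := by
    simp only [f, hpos, ← zpow_neg, trailingExponent_of_zpow]
    ring
  have hlen : t + 1 < s.length := lt_of_le_of_ne ht fun h ↦ by
    rw [hlast _ h.ge] at hfτ
    omega
  refine ⟨t + 1, hlen, (l - f t).toNat, Finset.mem_Icc.2 ⟨by omega, by omega⟩, ?_⟩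
  rw [hpos, ← zpow_natCast, Int.toNat_of_nonneg (by omega)]

theorem firstPassage_of_pow_eq_sum {n k : ℕ} (hk : n < k) (W : FreeGroup α → ℝ≥0∞)
    (hW : ∀ g, W g ≠ 0 → ∃ (i' : α) (l : ℤ), |l| ≤ n ∧ g = of i' ^ l) :
    firstPassage W 1 (of i ^ k) ∅ = ∑ j ∈ Finset.Icc 1 n,
      firstPassage W 1 (of i ^ j) ((fun j : ℕ ↦ of i ^ j) '' Set.Icc 1 n \ {of i ^ j}) *
        firstPassage W 1 (of i ^ (k - j)) ∅ := by
  set B := (Finset.Icc 1 n).image fun j : ℕ ↦ of i ^ j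
  have hB : Separates W ↑B 1 (of i ^ k) := fun s hs hprod ↦ by
    obtain ⟨t, ht, j, hj, htake⟩ :=
      exists_take_prod_eq_of_pow i hk (fun g hg ↦ hW g (hs g hg)) (by simpa using hprod)
    refine ⟨t, ht, ?_⟩
    rw [one_mul, htake, Finset.coe_image]
    exact Set.mem_image_of_mem _ hj
  rw [hB.firstPassage_eq_sum, Finset.sum_image fun a _ b _ h ↦ of_pow_injective i h]
  refine Finset.sum_congr rfl fun j hj ↦ ?_
  have hjk : j ≤ k := (Finset.mem_Icc.1 hj).2.trans hk.le
  rw [← firstPassage_mul_left W (of i ^ j) 1 (of i ^ (k - j)), mul_one, Set.smul_set_empty,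
    ← pow_add, Nat.add_sub_cancel' hjk]
  simp [B]

end FreeGroup

theorem stmt13_general {m : ℕ} (n : ℕ) (μ : FreeGroup (Fin m) → ℝ)
    (hμ : IsProb μ)
    (hsupp : ∀ g : FreeGroup (Fin m), 0 < μ g →
      ∃ (i : Fin m) (l : ℤ), 1 ≤ |l| ∧ |l| ≤ (n : ℤ) ∧ g = FreeGroup.of i ^ l)
    (i : Fin m)
    (B : Set (FreeGroup (Fin m)))
    (hB : B = (fun j : ℕ => FreeGroup.of i ^ j) '' Set.Icc 1 n)
    (p : ℕ → ℝ)
    (hp : ∀ j, 1 ≤ j → j ≤ n →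
      p j = FP μ 1 (FreeGroup.of i ^ j) (B \ {FreeGroup.of i ^ j}))
    (k : ℕ) (hk : n < k) :
    FP μ 1 (FreeGroup.of i ^ k) ∅ =
      ∑ j ∈ Finset.Icc 1 n, p j * FP μ 1 (FreeGroup.of i ^ (k - j)) ∅ := by
  set W := fun g ↦ ENNReal.ofReal (μ g)
  have hW (g) (hg : W g ≠ 0) : ∃ (i' : Fin m) (l : ℤ), |l| ≤ n ∧ g = FreeGroup.of i' ^ l := by
    obtain ⟨i', l, -, hl, rfl⟩ := hsupp g (ENNReal.ofReal_pos.1 (pos_iff_ne_zero.2 hg))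
    exact ⟨i', l, hl, rfl⟩
  have hfin (x y) (S : Set (FreeGroup (Fin m))) : firstPassage W x y S ≠ ⊤ :=
    ne_top_of_le_ne_top ENNReal.one_ne_top (firstPassage_le_one hμ.tsum_ofReal_eq_one x y S)
  rw [FP_eq_toReal_firstPassage hμ, firstPassage_of_pow_eq_sum i hk W hW, ← hB,
    ENNReal.toReal_sum fun j _ ↦ ENNReal.mul_ne_top (hfin _ _ _) (hfin _ _ _)]
  refine Finset.sum_congr rfl fun j hj ↦ ?_
  rw [ENNReal.toReal_mul, hp j (Finset.mem_Icc.1 hj).1 (Finset.mem_Icc.1 hj).2,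
    FP_eq_toReal_firstPassage hμ, FP_eq_toReal_firstPassage hμ]

/-- the linear recurrence for the first-passage function along powers
of a generator, for a random walk supported on powers of the generators. -/
theorem stmt13 {m : ℕ} (n : ℕ) (hn : 1 ≤ n) (μ : FreeGroup (Fin m) → ℝ)
    (hμ : IsProb μ)
    (hsupp : ∀ g : FreeGroup (Fin m), 0 < μ g →
      ∃ (i : Fin m) (l : ℤ), 1 ≤ |l| ∧ |l| ≤ (n : ℤ) ∧ g = FreeGroup.of i ^ l)
    (i : Fin m)
    (B : Set (FreeGroup (Fin m)))
    (hB : B = (fun j : ℕ => FreeGroup.of i ^ j) '' Set.Icc 1 n)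
    (p : ℕ → ℝ)
    (hp : ∀ j, 1 ≤ j → j ≤ n →
      p j = FP μ 1 (FreeGroup.of i ^ j) (B \ {FreeGroup.of i ^ j}))
    (k : ℕ) (hk : n < k) :
    FP μ 1 (FreeGroup.of i ^ k) ∅ =
      ∑ j ∈ Finset.Icc 1 n, p j * FP μ 1 (FreeGroup.of i ^ (k - j)) ∅ :=
  stmt13_general n μ hμ hsupp i B hB p hp k hk
end

section
/- Let G and H be countable groups, let p : G → H be a group homomorphism, let μ be a probability measure on G, and let μ' := p_*μ be its pushforward, defined by μ'(h) = Σ_{a ∈ G, p(a) = h} μ(a). Then for every g ∈ G one has F_{μ'}(e_H, p(g)) ≥ F_μ(e_G, g), where in each group the first-passage function is defined by the same path-sum formula. -/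
/-!
Encode a walk by its list of increments, so that its weight is the product of the weights of
the increments. A walk in `G` first hitting `g` splits at its first visit to the fibre
`p⁻¹(p g)` into a walk first hitting the fibre and a walk first hitting `g`. Walks first
hitting a fixed set form a prefix-free family of increment lists, so, as in Kraft's inequality,
their total weight is at most `1`; hence `F_μ(1, g)` is at most the total weight of walks first
hitting the fibre. Those are exactly the lifts of the walks in `H` first hitting `p g`, and the
`p_*μ`-weight of a walk in `H` is the total `μ`-weight of its lifts.
-/

open scoped BigOperators

open scoped ENNReal

namespace FirstPassage

noncomputable section

open Function

section Weight

variable {α β : Type*} (ν : α → ℝ≥0∞)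

def listWeight (l : List α) : ℝ≥0∞ := (l.map ν).prod

def pushforward (f : α → β) (b : β) : ℝ≥0∞ := ∑' a : {a // f a = b}, ν a

@[simp] lemma listWeight_cons (a : α) (l : List α) :
    listWeight ν (a :: l) = ν a * listWeight ν l := List.prod_cons

lemma listWeight_append (l t : List α) :
    listWeight ν (l ++ t) = listWeight ν l * listWeight ν t := by
  simp [listWeight]

def liftConsEquiv (f : α → β) (b : β) (t : List β) :
    {a // f a = b} × {l : List α // l.map f = t} ≃ {l : List α // l.map f = b :: t} where
  toFun q := ⟨q.1.1 :: q.2.1, by simp [q.1.2, q.2.2]⟩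
  invFun
    | ⟨[], hl⟩ => absurd hl (List.cons_ne_nil _ _).symm
    | ⟨a :: l, hl⟩ => (⟨a, (List.cons_eq_cons.1 hl).1⟩, ⟨l, (List.cons_eq_cons.1 hl).2⟩)
  left_inv _ := rfl
  right_inv
    | ⟨[], hl⟩ => absurd hl (List.cons_ne_nil _ _).symm
    | ⟨_ :: _, _⟩ => rfl

lemma tsum_pushforward (f : α → β) : ∑' b, pushforward ν f b = ∑' a, ν a :=
  ENNReal.tsum_fiberwise ν f

lemma listWeight_pushforward (f : α → β) (t : List β) :
    listWeight (pushforward ν f) t = ∑' l : {l : List α // l.map f = t}, listWeight ν l := by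
  induction t with
  | nil =>
    rw [tsum_eq_single (⟨[], rfl⟩ : {l : List α // l.map f = []})
      fun l hl => (hl (Subtype.ext (List.map_eq_nil_iff.1 l.2))).elim]
    rfl
  | cons b t ih =>
    rw [listWeight_cons, ih, pushforward, ← (liftConsEquiv f b t).tsum_eq]
    simp only [liftConsEquiv, Equiv.coe_fn_mk, listWeight_cons]
    rw [ENNReal.tsum_prod', ← ENNReal.tsum_mul_right]
    simp_rw [← ENNReal.tsum_mul_left]

lemma tsum_listWeight_length (n : ℕ) :
    ∑' l : {l : List α // l.length = n}, listWeight ν l = (∑' a, ν a) ^ n := by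
  -- lists of length `n` are the lifts of `replicate n ()` along `α → Unit`
  have hlift : ∀ l : List α, l.map (fun _ => ()) = List.replicate n () ↔ l.length = n := by
    simp [List.map_const', List.replicate_inj]
  rw [← (Equiv.subtypeEquivRight hlift).tsum_eq]
  refine (listWeight_pushforward ν _ _).symm.trans ?_
  rw [listWeight, List.map_replicate, List.prod_replicate, pushforward]
  exact congrArg (· ^ n)
    ((Equiv.subtypeUnivEquiv (p := fun _ : α => () = ()) fun _ => rfl).tsum_eq ν)

theorem tsum_listWeight_le_one_of_prefixFree (hν : ∑' a, ν a = 1) {P : List α → Prop}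
    (hP : ∀ ⦃l₁ l₂⦄, P l₁ → P l₂ → l₁ <+: l₂ → l₁ = l₂) :
    ∑' l : {l // P l}, listWeight ν l ≤ 1 := by
  rw [ENNReal.tsum_eq_iSup_sum]
  refine iSup_le fun F => ?_
  set N := F.sup fun l => l.1.length
  have hN : ∀ l ∈ F, l.1.length ≤ N := fun _ hl => Finset.le_sup (f := fun l => l.1.length) hl
  let extend : (Σ l : F, {t : List α // t.length = N - l.1.1.length}) →
      {s : List α // s.length = N} :=
    fun q => ⟨q.1.1.1 ++ q.2.1, by simp [q.2.2, hN _ q.1.2]⟩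
  have hextend : Injective extend := by
    rintro ⟨⟨⟨l₁, hl₁⟩, _⟩, ⟨t₁, _⟩⟩ ⟨⟨⟨l₂, hl₂⟩, _⟩, ⟨t₂, _⟩⟩ h
    have h : l₁ ++ t₁ = l₂ ++ t₂ := congrArg Subtype.val h
    obtain rfl : l₁ = l₂ := by
      rcases List.prefix_or_prefix_of_prefix ⟨t₁, rfl⟩ ⟨t₂, h.symm⟩ with h₁₂ | h₂₁
      exacts [hP hl₁ hl₂ h₁₂, (hP hl₂ hl₁ h₂₁).symm]
    obtain rfl := List.append_cancel_left h
    rfl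
  calc ∑ l ∈ F, listWeight ν l
      = ∑' l : F, ∑' t : {t : List α // t.length = N - l.1.1.length},
          listWeight ν (l.1.1 ++ t) := by
        rw [← Finset.tsum_subtype]
        refine tsum_congr fun l => ?_
        simp_rw [listWeight_append, ENNReal.tsum_mul_left, tsum_listWeight_length, hν, one_pow,
          mul_one]
    _ = ∑' q, listWeight ν (extend q) :=
        (ENNReal.tsum_sigma' fun q => listWeight ν (extend q)).symm
    _ ≤ ∑' s : {s : List α // s.length = N}, listWeight ν s :=
        ENNReal.tsum_comp_le_tsum_of_injective hextend _
    _ = 1 := by rw [tsum_listWeight_length, hν, one_pow]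

end Weight

section Hitting

variable {G H : Type*} [Monoid G] [Monoid H] (ν : G → ℝ≥0∞)

def HitsFirst (x : G) (A : Set G) (l : List G) : Prop :=
  x * l.prod ∈ A ∧ ∀ n < l.length, x * (l.take n).prod ∉ A

def hittingWeight (x : G) (A : Set G) : ℝ≥0∞ :=
  ∑' l : {l // HitsFirst x A l}, listWeight ν l

variable {ν}

theorem HitsFirst.eq_of_prefix {x : G} {A : Set G} {l₁ l₂ : List G} (h₁ : HitsFirst x A l₁)
    (h₂ : HitsFirst x A l₂) (h : l₁ <+: l₂) : l₁ = l₂ := by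
  refine h.eq_of_length (h.length_le.antisymm (not_lt.1 fun hlt => h₂.2 _ hlt ?_))
  rw [← List.prefix_iff_eq_take.1 h]
  exact h₁.1

theorem hittingWeight_le_one (hν : ∑' a, ν a = 1) (x : G) (A : Set G) :
    hittingWeight ν x A ≤ 1 :=
  tsum_listWeight_le_one_of_prefixFree ν hν fun _ _ => HitsFirst.eq_of_prefix

theorem hittingWeight_ne_top (hν : ∑' a, ν a = 1) (x : G) (A : Set G) :
    hittingWeight ν x A ≠ ∞ :=
  ne_top_of_le_ne_top ENNReal.one_ne_top (hittingWeight_le_one hν x A)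

theorem HitsFirst.exists_split {x : G} {A B : Set G} {l : List G} (hAB : A ⊆ B)
    (h : HitsFirst x A l) :
    ∃ n, HitsFirst x B (l.take n) ∧ HitsFirst (x * (l.take n).prod) A (l.drop n) := by
  classical
  have hB : ∃ n, n ≤ l.length ∧ x * (l.take n).prod ∈ B :=
    ⟨l.length, le_rfl, by simpa using hAB h.1⟩
  obtain ⟨hn, hnB⟩ := Nat.find_spec hB
  refine ⟨Nat.find hB, ⟨hnB, fun m hm hmB => ?_⟩, ?_, fun m hm => ?_⟩
  · rw [List.length_take_of_le hn] at hm
    rw [List.take_take, min_eq_left hm.le] at hmB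
    exact Nat.find_min hB hm ⟨by omega, hmB⟩
  · rw [mul_assoc, List.prod_take_mul_prod_drop]
    exact h.1
  · rw [mul_assoc, ← List.prod_append, ← List.take_add]
    exact h.2 _ (by rw [List.length_drop] at hm; omega)

theorem hittingWeight_mono (hν : ∑' a, ν a = 1) {A B : Set G} (hAB : A ⊆ B) (x : G) :
    hittingWeight ν x A ≤ hittingWeight ν x B := by
  choose n hB hA using fun l : {l // HitsFirst x A l} => l.2.exists_split hAB
  let split : {l // HitsFirst x A l} →
      Σ l : {l // HitsFirst x B l}, {t // HitsFirst (x * l.1.prod) A t} :=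
    fun l => ⟨⟨_, hB l⟩, ⟨_, hA l⟩⟩
  have hsplit : Injective split := fun l₁ l₂ h => Subtype.ext <| by
    simpa only [split, List.take_append_drop] using congrArg (fun q => q.1.1 ++ q.2.1) h
  calc hittingWeight ν x A
      = ∑' l, listWeight ν (split l).1 * listWeight ν (split l).2 := by
        simp only [split, hittingWeight, ← listWeight_append, List.take_append_drop]
    _ ≤ ∑' q : Σ l : {l // HitsFirst x B l}, {t // HitsFirst (x * l.1.prod) A t},
          listWeight ν q.1 * listWeight ν q.2 :=
        ENNReal.tsum_comp_le_tsum_of_injective hsplit _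
    _ = ∑' l : {l // HitsFirst x B l}, listWeight ν l * hittingWeight ν (x * l.1.prod) A := by
        rw [ENNReal.tsum_sigma']
        simp only [hittingWeight, ENNReal.tsum_mul_left]
    _ ≤ ∑' l : {l // HitsFirst x B l}, listWeight ν l * 1 := by
        gcongr
        exact hittingWeight_le_one hν _ _
    _ = hittingWeight ν x B := by simp only [mul_one, hittingWeight]

theorem hitsFirst_preimage_iff (p : G →* H) {x : G} {B : Set H} {l : List G} :
    HitsFirst x (p ⁻¹' B) l ↔ HitsFirst (p x) B (l.map p) := by
  simp [HitsFirst, ← List.map_take, map_list_prod]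

variable (ν) in
theorem hittingWeight_preimage (p : G →* H) (x : G) (B : Set H) :
    hittingWeight ν x (p ⁻¹' B) = hittingWeight (pushforward ν p) (p x) B := by
  rw [hittingWeight, hittingWeight,
    ← (Equiv.sigmaSubtypeFiberEquivSubtype _ fun _ => hitsFirst_preimage_iff p).tsum_eq,
    ENNReal.tsum_sigma']
  simp_rw [listWeight_pushforward]
  rfl

end Hitting

section Paths

variable {G : Type*} [Group G]

def FPENNReal (ν : G → ℝ≥0∞) (x y : G) (S : Set G) : ℝ≥0∞ :=
  ∑' k : ℕ,
    ∑' f : {f : Fin (k + 1) → G // f 0 = x ∧ f (Fin.last k) = y ∧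
        ∀ j : Fin k, f j.castSucc ∉ S ∪ {y}},
      ∏ j : Fin k, ν ((f.1 j.castSucc)⁻¹ * f.1 j.succ)

theorem FP_eq_toReal_FPENNReal {μ : G → ℝ} (hμ : ∀ a, 0 ≤ μ a) {x y : G} {S : Set G}
    (hfin : FPENNReal (fun a => ENNReal.ofReal (μ a)) x y S ≠ ∞) :
    FP μ x y S = (FPENNReal (fun a => ENNReal.ofReal (μ a)) x y S).toReal := by
  rw [FPENNReal, ENNReal.tsum_toReal_eq fun k => ne_top_of_le_ne_top hfin (ENNReal.le_tsum k),
    FP]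
  refine tsum_congr fun k => ?_
  rw [ENNReal.tsum_toReal_eq fun f => ENNReal.prod_ne_top fun _ _ => ENNReal.ofReal_ne_top]
  refine tsum_congr fun f => ?_
  rw [← ENNReal.ofReal_prod_of_nonneg fun _ _ => hμ _,
    ENNReal.toReal_ofReal (Finset.prod_nonneg fun _ _ => hμ _)]

abbrev FirstPassagePath (x y : G) (k : ℕ) :=
  {f : Fin (k + 1) → G // f 0 = x ∧ f (Fin.last k) = y ∧
    ∀ j : Fin k, f j.castSucc ∉ (∅ : Set G) ∪ {y}}

def increments {k : ℕ} (f : Fin (k + 1) → G) : List G :=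
  List.ofFn fun j : Fin k => (f j.castSucc)⁻¹ * f j.succ

theorem apply_eq_mul_prod_take_increments {k : ℕ} (f : Fin (k + 1) → G) (i : Fin (k + 1)) :
    f i = f 0 * ((increments f).take i).prod :=
  (congrFun (Fin.partialProd_left_inv f) i).symm

theorem hitsFirst_increments {x y : G} {k : ℕ} (f : FirstPassagePath x y k) :
    HitsFirst x {y} (increments f.1) := by
  obtain ⟨f, hf0, hfy, hf⟩ := f
  refine ⟨?_, fun n hn => ?_⟩
  · have h := apply_eq_mul_prod_take_increments f (Fin.last k)
    rw [Fin.val_last, List.take_of_length_le (by simp [increments]), hf0, hfy] at h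
    exact h.symm
  · rw [increments, List.length_ofFn] at hn
    have h := hf ⟨n, hn⟩
    rw [apply_eq_mul_prod_take_increments f, hf0] at h
    simpa using h

theorem increments_bijective (x y : G) :
    Bijective fun q : Σ k, FirstPassagePath x y k =>
      (⟨increments q.2.1, hitsFirst_increments q.2⟩ : {l // HitsFirst x {y} l}) := by
  refine ⟨?_, ?_⟩
  · rintro ⟨k₁, f₁, hf₁⟩ ⟨k₂, f₂, hf₂⟩ h
    have h : increments f₁ = increments f₂ := congrArg Subtype.val h
    obtain rfl : k₁ = k₂ := by simpa [increments] using congrArg List.length h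
    obtain rfl : f₁ = f₂ := by
      rw [← Fin.partialProd_left_inv f₁, ← Fin.partialProd_left_inv f₂, hf₁.1, hf₂.1,
        List.ofFn_injective h]
    rfl
  · rintro ⟨l, hl⟩
    refine ⟨⟨l.length, x • Fin.partialProd l.get, ?_, ?_, fun j => ?_⟩, ?_⟩
    · simp
    · simpa [Fin.partialProd] using hl.1
    · simpa [Fin.partialProd] using hl.2 j j.2
    · ext1
      simp [increments, mul_assoc, Fin.partialProd_right_inv]

theorem FPENNReal_empty_eq_hittingWeight (ν : G → ℝ≥0∞) (x y : G) :
    FPENNReal ν x y ∅ = hittingWeight ν x {y} := by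
  rw [FPENNReal, hittingWeight, ← (Equiv.ofBijective _ (increments_bijective x y)).tsum_eq,
    ← ENNReal.tsum_sigma' fun q : Σ k, FirstPassagePath x y k =>
      ∏ j : Fin q.1, ν ((q.2.1 j.castSucc)⁻¹ * q.2.1 j.succ)]
  refine tsum_congr fun q => ?_
  simp [listWeight, increments, List.prod_ofFn]

theorem FP_eq_toReal_hittingWeight {μ : G → ℝ} (hμ : ∀ a, 0 ≤ μ a)
    (hμ1 : ∑' a, ENNReal.ofReal (μ a) = 1) (x y : G) :
    FP μ x y ∅ = (hittingWeight (fun a => ENNReal.ofReal (μ a)) x {y}).toReal := by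
  have hfin : FPENNReal (fun a => ENNReal.ofReal (μ a)) x y ∅ ≠ ∞ := by
    rw [FPENNReal_empty_eq_hittingWeight]
    exact hittingWeight_ne_top hμ1 x {y}
  rw [FP_eq_toReal_FPENNReal hμ hfin, FPENNReal_empty_eq_hittingWeight]

end Paths

end

end FirstPassage

open FirstPassage in
theorem stmt17_general {G H : Type*} [Group G] [Group H]
    (p : G →* H) (μ : G → ℝ) (hμ : IsProb μ)
    (μ' : H → ℝ) (hμ' : ∀ h : H, μ' h = ∑' a : {a : G // p a = h}, μ (a : G))
    (g : G) :
    FP μ 1 g ∅ ≤ FP μ' 1 (p g) ∅ := by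
  obtain ⟨hμ0, hμ1⟩ := hμ
  have hμsum : Summable μ := by
    by_contra h
    rw [tsum_eq_zero_of_not_summable h] at hμ1
    exact zero_ne_one hμ1
  set ν : G → ℝ≥0∞ := fun a => ENNReal.ofReal (μ a)
  have hν : ∑' a, ν a = 1 := by
    rw [← ENNReal.ofReal_tsum_of_nonneg hμ0 hμsum, hμ1, ENNReal.ofReal_one]
  have hμ'ν : (fun h => ENNReal.ofReal (μ' h)) = pushforward ν p := funext fun h => by
    rw [hμ' h, ENNReal.ofReal_tsum_of_nonneg (f := fun a : {a // p a = h} => μ a)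
      (fun a => hμ0 a) (hμsum.subtype _)]
    rfl
  have hμ'0 : ∀ h, 0 ≤ μ' h := fun h => (hμ' h).symm ▸ tsum_nonneg fun a => hμ0 a
  have hfibre : hittingWeight ν 1 {g} ≤ hittingWeight ν 1 (p ⁻¹' {p g}) :=
    hittingWeight_mono hν (by simp) 1
  rw [FP_eq_toReal_hittingWeight hμ0 hν, FP_eq_toReal_hittingWeight hμ'0
    (by rw [hμ'ν, tsum_pushforward, hν]), hμ'ν, ← map_one p, ← hittingWeight_preimage]
  exact ENNReal.toReal_mono (hittingWeight_ne_top hν _ _) hfibre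

/-- the first-passage function does not decrease under pushforward of the
measure by a group homomorphism. -/
theorem stmt17 {G H : Type*} [Group G] [Group H] [Countable G] [Countable H]
    (p : G →* H) (μ : G → ℝ) (hμ : IsProb μ)
    (μ' : H → ℝ) (hμ' : ∀ h : H, μ' h = ∑' a : {a : G // p a = h}, μ (a : G))
    (g : G) :
    FP μ 1 g ∅ ≤ FP μ' 1 (p g) ∅ :=
  stmt17_general p μ hμ μ' hμ' g
end
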